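/- Let α := (1−σ²)²/(200·Q·L). Then the matrix I₃ − G_α is invertible and the spectral radius of (I₃ − G_α)⁻¹ H_α satisfies ρ((I₃ − G_α)⁻¹ H_α) ≤ 0.85. -/

import Mathlib

/-- The spectral radius of a real square matrix: the maximum modulus of its
complex eigenvalues. -/
noncomputable def specRad {d : ℕ} (A : Matrix (Fin d) (Fin d) ℝ) : ℝ :=
  sSup ((fun z : ℂ => ‖z‖) '' spectrum ℂ (A.map Complex.ofReal))

/-- The matrix `G_α` governing the inner-loop dynamics of GT-SVRG. -/
noncomputable def Gmat (L μ σ α : ℝ) : Matrix (Fin 3) (Fin 3) ℝ :=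
  !![(1 + σ ^ 2) / 2, 0, 2 * α ^ 2 / (1 - σ ^ 2);
     2 * L ^ 2 * α / μ, 1 - μ * α / 2, 0;
     100 * L ^ 2 / (1 - σ ^ 2), 70 * L ^ 2 / (1 - σ ^ 2),
       (1 + σ ^ 2) / 2 + 40 * L ^ 2 * α ^ 2 / (1 - σ ^ 2)]

/-- The matrix `H_α` acting on the initial conditions of each inner loop. -/
noncomputable def Hmat (L μ σ α : ℝ) : Matrix (Fin 3) (Fin 3) ℝ :=
  !![0, 0, 0;
     4 * L ^ 2 * α ^ 2, 4 * L ^ 2 * α ^ 2, 0;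
     60 * L ^ 2 / (1 - σ ^ 2), 60 * L ^ 2 / (1 - σ ^ 2), 0]


/-!
`H_α = h ⬝ (1, 1, 0)ᵀ` has rank one, hence so has `(I - G_α)⁻¹ H_α = x ⬝ (1, 1, 0)ᵀ`
with `x = (I - G_α)⁻¹ h`, and its only eigenvalue besides `0` is `x₀ + x₁`. For the chosen
step size, `det (I - G_α)` and `x` are explicit rational functions of `L`, `μ` and `s = 1 - σ²`;
the denominator they share is at least `461 L²`, which gives `x₀ + x₁ ≤ 1/25 + 1/10`.
-/

open Matrix

theorem Matrix.spectrum_vecMulVec_subset {n K : Type*} [Fintype n] [DecidableEq n] [Field K]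
    (u v : n → K) : spectrum K (vecMulVec u v) ⊆ {0, u ⬝ᵥ v} := by
  intro z hz
  rw [mem_spectrum_iff_isRoot_charpoly, charpoly_vecMulVec] at hz
  by_cases h : Fintype.card n = 0
  · simp [Fintype.card_eq_zero_iff.mp h] at hz
  · obtain ⟨k, hk⟩ := Nat.exists_eq_succ_of_ne_zero h
    have : z ^ k * (z - u ⬝ᵥ v) = 0 := by
      simpa [hk, pow_succ, mul_sub, mul_comm] using hz
    rcases mul_eq_zero.mp this with h0 | h1
    · exact .inl (pow_eq_zero_iff'.mp h0).1
    · exact .inr (sub_eq_zero.mp h1)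

theorem specRad_vecMulVec_le {d : ℕ} (u v : Fin d → ℝ) :
    specRad (vecMulVec u v) ≤ |u ⬝ᵥ v| := by
  refine Real.sSup_le ?_ (abs_nonneg _)
  rintro _ ⟨z, hz, rfl⟩
  have hmap : (vecMulVec u v).map Complex.ofReal =
      vecMulVec (Complex.ofReal ∘ u) (Complex.ofReal ∘ v) := by
    ext i j
    simp [vecMulVec_apply]
  have hdot : Complex.ofReal ∘ u ⬝ᵥ Complex.ofReal ∘ v = (u ⬝ᵥ v : ℝ) :=
    (Complex.ofRealHom.map_dotProduct u v).symm
  rw [hmap] at hz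
  rcases spectrum_vecMulVec_subset _ _ hz with rfl | rfl
  · simp
  · simp [hdot]

theorem Hmat_eq_vecMulVec (L μ σ α : ℝ) :
    Hmat L μ σ α = vecMulVec ![0, 4 * L ^ 2 * α ^ 2, 60 * L ^ 2 / (1 - σ ^ 2)] ![1, 1, 0] := by
  ext i j
  fin_cases i <;> fin_cases j <;> simp [Hmat, vecMulVec_apply]

theorem one_sub_Gmat (L μ σ α : ℝ) :
    1 - Gmat L μ σ α =
      !![(1 - σ ^ 2) / 2, 0, -(2 * α ^ 2 / (1 - σ ^ 2));
         -(2 * L ^ 2 * α / μ), μ * α / 2, 0;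
         -(100 * L ^ 2 / (1 - σ ^ 2)), -(70 * L ^ 2 / (1 - σ ^ 2)),
           (1 - σ ^ 2) / 2 - 40 * L ^ 2 * α ^ 2 / (1 - σ ^ 2)] := by
  rw [one_fin_three, Gmat]
  ext i j
  fin_cases i <;> fin_cases j <;>
    simp only [Fin.zero_eta, Fin.mk_one, Fin.reduceFinMk, Matrix.sub_apply, of_apply, cons_val',
      cons_val_zero, cons_val_one, cons_val, cons_val_fin_one] <;> ring

noncomputable def detFactor (L μ s : ℝ) : ℝ := 472 * L ^ 2 - (10 + s ^ 2) * μ ^ 2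

theorem le_detFactor {L μ s : ℝ} (hμ : 0 ≤ μ) (hμL : μ ≤ L) (hs0 : 0 ≤ s) (hs1 : s ≤ 1) :
    461 * L ^ 2 ≤ detFactor L μ s := by
  have : s ^ 2 ≤ 1 := pow_le_one₀ hs0 hs1
  have : μ ^ 2 ≤ L ^ 2 := pow_le_pow_left₀ hμ hμL 2
  unfold detFactor
  nlinarith

theorem detFactor_pos {L μ s : ℝ} (hμ : 0 < μ) (hμL : μ ≤ L) (hs0 : 0 ≤ s) (hs1 : s ≤ 1) :
    0 < detFactor L μ s := by
  linarith [pow_pos (hμ.trans_le hμL) 2, le_detFactor hμ.le hμL hs0 hs1]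

/-- `(1 - G_α)⁻¹ h` at `α = s²μ / (200 L²)`, where `s = 1 - σ²`. -/
noncomputable def eigenvec (L μ s : ℝ) : Fin 3 → ℝ :=
  ![μ ^ 2 * (300 + 14 * s ^ 2) / (50 * detFactor L μ s),
    s ^ 2 / 25 + 2 * L ^ 2 * (300 + 14 * s ^ 2) / (25 * detFactor L μ s),
    200 * L ^ 4 * (300 + 14 * s ^ 2) / (s ^ 2 * detFactor L μ s)]

theorem det_one_sub_Gmat {L μ σ : ℝ} (hL : L ≠ 0) (hμ : μ ≠ 0) (hs : 1 - σ ^ 2 ≠ 0) :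
    (1 - Gmat L μ σ ((1 - σ ^ 2) ^ 2 / (200 * (L / μ) * L))).det =
      μ ^ 2 * (1 - σ ^ 2) ^ 4 * detFactor L μ (1 - σ ^ 2) / (800000 * L ^ 4) := by
  simp only [one_sub_Gmat, det_fin_three, of_apply, cons_val', cons_val_zero, cons_val_one,
    cons_val, cons_val_fin_one, detFactor]
  field_simp
  ring

theorem one_sub_Gmat_mulVec_eigenvec {L μ σ : ℝ} (hL : L ≠ 0) (hs : 1 - σ ^ 2 ≠ 0)
    (hm : detFactor L μ (1 - σ ^ 2) ≠ 0) :
    let α := (1 - σ ^ 2) ^ 2 / (200 * (L / μ) * L)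
    (1 - Gmat L μ σ α) *ᵥ eigenvec L μ (1 - σ ^ 2) =
      ![0, 4 * L ^ 2 * α ^ 2, 60 * L ^ 2 / (1 - σ ^ 2)] := by
  dsimp only
  rw [one_sub_Gmat, eigenvec]
  ext i
  fin_cases i <;>
    simp only [cons_mulVec, vec3_dotProduct', Fin.zero_eta, Fin.mk_one, Fin.reduceFinMk,
      cons_val_zero, cons_val_one, cons_val] <;>
    field_simp <;> unfold detFactor <;> ring

theorem eigenvec_dotProduct_le {L μ s : ℝ} (hμ : 0 < μ) (hμL : μ ≤ L) (hs0 : 0 < s)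
    (hs1 : s ≤ 1) : |eigenvec L μ s ⬝ᵥ ![1, 1, 0]| ≤ 0.85 := by
  have hL : 0 < L := hμ.trans_le hμL
  have hm := detFactor_pos hμ hμL hs0.le hs1
  have : s ^ 2 ≤ 1 := pow_le_one₀ hs0.le hs1
  have : μ ^ 2 ≤ L ^ 2 := pow_le_pow_left₀ hμ.le hμL 2
  have hsum : eigenvec L μ s ⬝ᵥ ![1, 1, 0] =
      s ^ 2 / 25 + (300 + 14 * s ^ 2) * (μ ^ 2 + 4 * L ^ 2) / (50 * detFactor L μ s) := by
    have := hm.ne'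
    rw [eigenvec, vec3_dotProduct']
    field_simp
    ring
  have : (300 + 14 * s ^ 2) * (μ ^ 2 + 4 * L ^ 2) / (50 * detFactor L μ s) ≤ 1 / 10 := by
    rw [div_le_iff₀ (by positivity)]
    nlinarith [le_detFactor hμ.le hμL hs0.le hs1]
  rw [hsum, abs_of_nonneg (by positivity)]
  linarith

/-- With `α = (1−σ²)²/(200·Q·L)` and `Q = L/μ`, the matrix `I − G_α` is
invertible and `ρ((I − G_α)⁻¹ H_α) ≤ 0.85`. -/
theorem specRad_inv_mul_Hmat_le (L μ σ : ℝ)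
    (hμ : 0 < μ) (hμL : μ ≤ L) (hσ0 : 0 < σ) (hσ1 : σ < 1) :
    let α : ℝ := (1 - σ ^ 2) ^ 2 / (200 * (L / μ) * L)
    IsUnit (1 - Gmat L μ σ α) ∧
      specRad ((1 - Gmat L μ σ α)⁻¹ * Hmat L μ σ α) ≤ 0.85 := by
  intro α
  have hL : 0 < L := hμ.trans_le hμL
  have hs0 : 0 < 1 - σ ^ 2 := by nlinarith
  have hs1 : 1 - σ ^ 2 ≤ 1 := sub_le_self _ (sq_nonneg σ)
  have hm := detFactor_pos hμ hμL hs0.le hs1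
  have hdet : IsUnit (1 - Gmat L μ σ α).det := by
    rw [det_one_sub_Gmat hL.ne' hμ.ne' hs0.ne']
    exact (by positivity : (0 : ℝ) < _).ne'.isUnit
  refine ⟨(isUnit_iff_isUnit_det _).2 hdet, ?_⟩
  rw [Hmat_eq_vecMulVec, ← one_sub_Gmat_mulVec_eigenvec hL.ne' hs0.ne' hm.ne',
    ← mul_vecMulVec, nonsing_inv_mul_cancel_left _ _ hdet]
  exact (specRad_vecMulVec_le _ _).trans (eigenvec_dotProduct_le hμ hμL hs0 hs1)
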